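/- arXiv:2012.12167 — 4 statements merged into one kernel-verified Lean document; each statement's English description precedes it below -/
import Mathlib

section
/- For any h in the Filipović space H_w and any x ≥ 0, the inner product of h with the function h_x(y) = 1 + ∫_0^{min(x,y)} 1/w(s) ds equals the evaluation δ_x(h) = h(x); i.e., h_x is the Riesz representative of the evaluation functional δ_x. -/
open MeasureTheory Real Set

/-- A Filipović weight function: measurable, increasing on `[0,∞)`, `w(0)=1`,
`w ≥ 1`, and `∫_0^∞ 1/w < ∞`. -/
structure FiliWeight (w : ℝ → ℝ) : Prop where
  meas : Measurable w
  mono : MonotoneOn w (Set.Ici 0)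
  one_le : ∀ x, 0 ≤ x → 1 ≤ w x
  at_zero : w 0 = 1
  int_inv : MeasureTheory.IntegrableOn (fun s => (w s)⁻¹) (Set.Ioi 0)

/-- Membership of `h` (with weak derivative `h'`) in the Filipović space `H_w`:
`h` is absolutely continuous on `[0,∞)` with derivative `h'` and finite weighted energy. -/
structure FiliMem (w : ℝ → ℝ) (h h' : ℝ → ℝ) : Prop where
  meas_deriv : Measurable h'
  abs_cont : ∀ x, 0 ≤ x → h x = h 0 + ∫ s in (0:ℝ)..x, h' s
  energy : MeasureTheory.IntegrableOn (fun y => (h' y)^2 * w y) (Set.Ioi 0)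

/-- The inner product `⟨f,g⟩_w = f(0)g(0) + ∫_0^∞ f'(y)g'(y) w(y) dy` on `H_w`. -/
noncomputable def filiInner (w f g f' g' : ℝ → ℝ) : ℝ :=
  f 0 * g 0 + ∫ y in Set.Ioi (0:ℝ), f' y * g' y * w y

/-- The squared norm `‖f‖_w^2 = |f(0)|^2 + ∫_0^∞ |f'(y)|^2 w(y) dy` on `H_w`. -/
noncomputable def filiNormSq (w f f' : ℝ → ℝ) : ℝ :=
  (f 0)^2 + ∫ y in Set.Ioi (0:ℝ), (f' y)^2 * w y

/-- `h_x(y) = 1 + ∫_0^{x∧y} 1/w(s) ds` (with weak derivative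
`y ↦ (1/w(y)) 1_{y ≤ x}`) is the Riesz representative of the evaluation functional
`δ_x` on the Filipović space: `⟨h, h_x⟩_w = h(x)`. -/
theorem statement0 (w : ℝ → ℝ) (hw : FiliWeight w) (h h' : ℝ → ℝ)
    (hh : FiliMem w h h') (x : ℝ) (hx : 0 ≤ x) :
    filiInner w h (fun y => 1 + ∫ s in (0:ℝ)..(min x y), (w s)⁻¹)
      h' (fun y => if y ≤ x then (w y)⁻¹ else 0) = h x := by
  have hkey : ∀ y ∈ Ioi (0:ℝ),
      h' y * (if y ≤ x then (w y)⁻¹ else 0) * w y = (Ioc 0 x).indicator h' y := by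
    intro y hy
    by_cases hyx : y ≤ x
    · have hw1 : w y ≠ 0 := by
        have := hw.one_le y (le_of_lt hy); linarith
      simp only [hyx, if_true, indicator, mem_Ioc, hy, Set.mem_Ioi.mp hy, true_and]
      rw [mul_assoc, inv_mul_cancel₀ hw1, mul_one]
    · simp [hyx, indicator, mem_Ioc]
  rw [filiInner, hh.abs_cont x hx, intervalIntegral.integral_of_le hx]
  have h2 : (∫ y in Set.Ioi (0:ℝ),
      h' y * (if y ≤ x then (w y)⁻¹ else 0) * w y) = ∫ y in Set.Ioc (0:ℝ) x, h' y := by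
    rw [setIntegral_congr_fun measurableSet_Ioi hkey,
      setIntegral_indicator measurableSet_Ioc,
      Set.inter_eq_right.mpr Ioc_subset_Ioi_self]
  simp only [min_eq_right hx, intervalIntegral.integral_same, add_zero, mul_one]
  rw [h2]
end

section
/- The adjoint S_x^* of the left-shift operator S_x on the Filipović space H_w is given by (S_x^* g)(y) = g(0)(1 + ∫_0^{y∧x} 1/w(s) ds) + ∫_0^{(y−x)∨0} (w(s)/w(s+x)) g'(s) ds for all g ∈ H_w and y ≥ 0; i.e., ⟨S_x f, g⟩_w = ⟨f, S_x^* g⟩_w for all f, g ∈ H_w. -/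
/-!
Split `∫_0^∞ f' (S_x^* g)' w` at `y = x`. On `(0, x]` the weight cancels against
`(S_x^* g)' = g(0)/w`, leaving `g(0)(f(x) - f(0))`, which together with `f(0) g(0)` gives
`(S_x f)(0) g(0)`. On `(x, ∞)` the ratio `w(y - x)/w(y)` cancels the weight, and the substitution
`y ↦ y + x` turns the integral into `∫_0^∞ f'(y + x) g'(y) w(y) dy`; it converges because
`w(y - x) ≤ w(y)` dominates it by the two energies.
-/

open MeasureTheory Real Set

section Shift

variable {E : Type*} [NormedAddCommGroup E]

theorem integrableOn_Ioi_comp_sub_iff {G : ℝ → E} (a x : ℝ) :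
    IntegrableOn (fun y => G (y - x)) (Ioi (a + x)) ↔ IntegrableOn G (Ioi a) := by
  rw [← preimage_sub_const_Ioi]
  exact (measurePreserving_sub_right volume x).integrableOn_comp_preimage
    (measurableEmbedding_subRight x)

theorem setIntegral_Ioi_comp_add [NormedSpace ℝ E] (φ : ℝ → E) (a x : ℝ) :
    ∫ y in Ioi (a - x), φ (y + x) = ∫ y in Ioi a, φ y := by
  rw [← preimage_add_const_Ioi]
  exact (measurePreserving_add_right volume x).setIntegral_preimage_emb
    (measurableEmbedding_addRight x) φ (Ioi a)

end Shift

theorem abs_mul_mul_le_of_le {a b u v : ℝ} (hu : 0 ≤ u) (huv : u ≤ v) :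
    |a * (b * u)| ≤ (a ^ 2 * v + b ^ 2 * u) / 2 := by
  have hab : 2 * (|a| * |b|) ≤ a ^ 2 + b ^ 2 := by
    nlinarith [sq_nonneg (|a| - |b|), sq_abs a, sq_abs b]
  rw [abs_mul, abs_mul, abs_of_nonneg hu]
  nlinarith [mul_le_mul_of_nonneg_right hab hu, mul_le_mul_of_nonneg_left huv (sq_nonneg a)]

theorem FiliWeight.pos {w : ℝ → ℝ} (hw : FiliWeight w) {y : ℝ} (hy : 0 ≤ y) : 0 < w y :=
  one_pos.trans_le (hw.one_le y hy)

namespace FiliMem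

variable {w h h' f f' g g' : ℝ → ℝ}

theorem integrableOn_deriv_Ioc (hw : FiliWeight w) (hh : FiliMem w h h') {a b : ℝ}
    (ha : 0 ≤ a) :
    IntegrableOn h' (Ioc a b) := by
  have hmeas : AEStronglyMeasurable h' (volume.restrict (Ioc a b)) :=
    hh.meas_deriv.aestronglyMeasurable
  refine ((memLp_two_iff_integrable_sq hmeas).2 ?_).integrable one_le_two
  refine (hh.energy.mono_set (Ioc_subset_Ioi_self.trans (Ioi_subset_Ioi ha))).mono'
    (hmeas.pow 2) ?_
  filter_upwards [ae_restrict_mem measurableSet_Ioc] with y hy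
  rw [norm_pow, Real.norm_eq_abs, sq_abs]
  exact le_mul_of_one_le_right (sq_nonneg _) (hw.one_le y (ha.trans hy.1.le))

theorem setIntegral_deriv_Ioc (hh : FiliMem w h h') {x : ℝ} (hx : 0 ≤ x) :
    ∫ y in Ioc 0 x, h' y = h x - h 0 := by
  rw [hh.abs_cont x hx, intervalIntegral.integral_of_le hx]
  ring

theorem integrableOn_mul_shift_deriv (hw : FiliWeight w) (hf : FiliMem w f f')
    (hg : FiliMem w g g') {x : ℝ} (hx : 0 ≤ x) :
    IntegrableOn (fun y => f' y * (g' (y - x) * w (y - x))) (Ioi x) := by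
  have hdom : IntegrableOn (fun y => ((f' y) ^ 2 * w y + (g' (y - x)) ^ 2 * w (y - x)) / 2)
      (Ioi x) := by
    refine ((hf.energy.mono_set (Ioi_subset_Ioi hx)).add ?_).div_const 2
    simpa using (integrableOn_Ioi_comp_sub_iff (G := fun y => (g' y) ^ 2 * w y) 0 x).2 hg.energy
  refine hdom.mono' (hf.meas_deriv.mul ((hg.meas_deriv.comp (measurable_sub_const x)).mul
    (hw.meas.comp (measurable_sub_const x)))).aestronglyMeasurable ?_
  filter_upwards [ae_restrict_mem measurableSet_Ioi] with y (hy : x < y)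
  have hyx : 0 ≤ y - x := sub_nonneg.2 hy.le
  rw [Real.norm_eq_abs]
  exact abs_mul_mul_le_of_le (hw.pos hyx).le (hw.mono hyx (hx.trans hy.le) (sub_le_self _ hx))

end FiliMem

noncomputable def shiftAdjoint (w g g' : ℝ → ℝ) (x y : ℝ) : ℝ :=
  g 0 * (1 + ∫ s in (0:ℝ)..(min y x), (w s)⁻¹)
    + ∫ s in (0:ℝ)..(max (y - x) 0), (w s / w (s + x)) * g' s

noncomputable def shiftAdjointDeriv (w g g' : ℝ → ℝ) (x y : ℝ) : ℝ :=
  if y ≤ x then g 0 * (w y)⁻¹ else (w (y - x) / w y) * g' (y - x)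

section ShiftAdjoint

variable {w g g' : ℝ → ℝ} {x y : ℝ}

theorem shiftAdjoint_zero (hx : 0 ≤ x) : shiftAdjoint w g g' x 0 = g 0 := by
  simp [shiftAdjoint, hx]

theorem shiftAdjointDeriv_mul_of_mem_Ioc (hw : FiliWeight w) (hy : y ∈ Ioc 0 x) :
    shiftAdjointDeriv w g g' x y * w y = g 0 := by
  have := (hw.pos hy.1.le).ne'
  simp only [shiftAdjointDeriv, if_pos hy.2]
  field_simp

theorem shiftAdjointDeriv_mul_of_lt (hw : FiliWeight w) (hx : 0 ≤ x) (hy : x < y) :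
    shiftAdjointDeriv w g g' x y * w y = g' (y - x) * w (y - x) := by
  have := (hw.pos (hx.trans hy.le)).ne'
  simp only [shiftAdjointDeriv, if_neg hy.not_ge]
  field_simp

end ShiftAdjoint

/-- the adjoint of the left-shift operator `S_x` on `H_w` is given by
`(S_x^* g)(y) = g(0)(1 + ∫_0^{y∧x} 1/w) + ∫_0^{(y−x)∨0} (w(s)/w(s+x)) g'(s) ds`
(with weak derivative `y ↦ g(0)/w(y)` for `y ≤ x` and `y ↦ (w(y−x)/w(y)) g'(y−x)` for `y > x`),
i.e. `⟨S_x f, g⟩_w = ⟨f, S_x^* g⟩_w` for all `f, g ∈ H_w`. -/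
theorem statement3 (w : ℝ → ℝ) (hw : FiliWeight w) (x : ℝ) (hx : 0 ≤ x)
    (f f' g g' : ℝ → ℝ) (hf : FiliMem w f f') (hg : FiliMem w g g') :
    filiInner w (fun y => f (y + x)) g (fun y => f' (y + x)) g'
      = filiInner w f
          (fun y => g 0 * (1 + ∫ s in (0:ℝ)..(min y x), (w s)⁻¹)
            + ∫ s in (0:ℝ)..(max (y - x) 0), (w s / w (s + x)) * g' s)
          f'
          (fun y => if y ≤ x then g 0 * (w y)⁻¹ else (w (y - x) / w y) * g' (y - x)) := by
  change _ = filiInner w f (shiftAdjoint w g g' x) f' (shiftAdjointDeriv w g g' x)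
  set F := fun y => f' y * shiftAdjointDeriv w g g' x y * w y
  have hF_Ioc : EqOn F (fun y => g 0 * f' y) (Ioc 0 x) := fun y hy => by
    simp only [F, mul_assoc, shiftAdjointDeriv_mul_of_mem_Ioc hw hy, mul_comm (f' y)]
  have hF_Ioi : EqOn F (fun y => f' y * (g' (y - x) * w (y - x))) (Ioi x) := fun y hy => by
    simp only [F, mul_assoc, shiftAdjointDeriv_mul_of_lt hw hx hy]
  have hF_int_Ioc : IntegrableOn F (Ioc 0 x) :=
    IntegrableOn.congr_fun ((hf.integrableOn_deriv_Ioc hw le_rfl).const_mul (g 0)) hF_Ioc.symm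
      measurableSet_Ioc
  have hF_int_Ioi : IntegrableOn F (Ioi x) :=
    (hf.integrableOn_mul_shift_deriv hw hg hx).congr_fun hF_Ioi.symm measurableSet_Ioi
  have hF_split :
      ∫ y in Ioi 0, F y = g 0 * (f x - f 0) + ∫ y in Ioi 0, f' (y + x) * g' y * w y := by
    rw [← setIntegral_congr_set (Ioc_union_Ioi_eq_Ioi hx).eventuallyEq,
      setIntegral_union (Ioc_disjoint_Ioi le_rfl) measurableSet_Ioi hF_int_Ioc hF_int_Ioi,
      setIntegral_congr_fun measurableSet_Ioc hF_Ioc,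
      setIntegral_congr_fun measurableSet_Ioi hF_Ioi,
      integral_const_mul, hf.setIntegral_deriv_Ioc hx, ← setIntegral_Ioi_comp_add _ x x, sub_self]
    simp only [add_sub_cancel_right, mul_assoc]
  rw [filiInner, filiInner, shiftAdjoint_zero hx, hF_split, zero_add]
  ring
end

section
/- The Riesz representative of the averaging functional I_d on H_w is the function h_d^I(y) = 1 + (1/d) ∫_0^y (d − s∧d)/w(s) ds; that is, I_d(h) = ⟨h, h_d^I⟩_w for all h ∈ H_w. -/
/-! Writing `h u = h 0 + ∫₀ᵘ h'` and exchanging the order of integration (Cauchy's formula for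
repeated integration) gives `I_d(h) = h 0 + (1/d) ∫₀ᵈ (d - s) h'(s) ds`. In `⟨h, h_d^I⟩_w` the weight
cancels against the `1 / w` in the derivative of `h_d^I`, which vanishes beyond `d`, and `h_d^I(0) = 1`,
so the inner product is the same expression. -/

open MeasureTheory Real Set

open intervalIntegral Function

section

variable {E : Type*} [NormedAddCommGroup E] [NormedSpace ℝ E] [CompleteSpace E]

theorem integral_integral_eq_integral_sub_smul {f : ℝ → E} {a b : ℝ} (hab : a ≤ b)
    (hf : IntegrableOn f (Ioc a b)) :
    ∫ u in a..b, ∫ s in a..u, f s = ∫ s in a..b, (b - s) • f s := by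
  set μ := volume.restrict (Ioc a b)
  have hK : Integrable (uncurry fun u s => (Iic u).indicator f s) (μ.prod μ) := by
    have : Integrable (fun p : ℝ × ℝ => f p.2) (μ.prod μ) := by
      simpa using (integrable_const (1 : ℝ)).smul_prod hf
    exact this.indicator (measurableSet_le measurable_snd measurable_fst)
  rw [integral_of_le hab, integral_of_le hab]
  calc ∫ u in Ioc a b, ∫ s in a..u, f s = ∫ u, ∫ s, (Iic u).indicator f s ∂μ ∂μ := by
        refine setIntegral_congr_fun measurableSet_Ioc fun u hu => ?_
        rw [setIntegral_indicator measurableSet_Iic, Ioc_inter_Iic, min_eq_right hu.2,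
          integral_of_le hu.1.le]
    _ = ∫ s, ∫ u, (Iic u).indicator f s ∂μ ∂μ := integral_integral_swap hK
    _ = _ := by
        refine setIntegral_congr_fun measurableSet_Ioc fun s hs => ?_
        have hset : Ioc a b ∩ Ici s = Icc s b := by grind
        have hslice : (fun u => (Iic u).indicator f s) = (Ici s).indicator fun _ => f s := by
          ext u; simp [indicator_apply]
        rw [hslice, setIntegral_indicator measurableSet_Ici, hset, setIntegral_const,
          Real.volume_real_Icc_of_le hs.2]

theorem integral_eq_sub_smul_add_integral_sub_smul {h h' : ℝ → E} {a b : ℝ} (hab : a ≤ b)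
    (hh : ∀ x ∈ Icc a b, h x = h a + ∫ s in a..x, h' s) (hh' : IntegrableOn h' (Ioc a b)) :
    ∫ u in a..b, h u = (b - a) • h a + ∫ s in a..b, (b - s) • h' s := by
  have hprim : IntervalIntegrable (fun u => ∫ s in a..u, h' s) volume a b := by
    refine ContinuousOn.intervalIntegrable (continuousOn_primitive_interval ?_)
    rwa [uIcc_of_le hab, integrableOn_Icc_iff_integrableOn_Ioc]
  rw [integral_congr fun u hu => hh u (uIcc_of_le hab ▸ hu),
    integral_add intervalIntegrable_const hprim, intervalIntegral.integral_const,
    integral_integral_eq_integral_sub_smul hab hh']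

end

theorem Integrable.of_integrable_sq_mul {α : Type*} [MeasurableSpace α] {μ : Measure α}
    [IsFiniteMeasure μ] {f w : α → ℝ} (hf : AEStronglyMeasurable f μ) (hw : ∀ᵐ x ∂μ, 1 ≤ w x)
    (hfw : Integrable (fun x => f x ^ 2 * w x) μ) : Integrable f μ := by
  have hsq : Integrable (fun x => f x ^ 2) μ := by
    refine hfw.mono' (hf.pow 2) (hw.mono fun x hx => ?_)
    rw [Real.norm_eq_abs, abs_of_nonneg (sq_nonneg _)]
    exact le_mul_of_one_le_right (sq_nonneg _) hx
  exact ((memLp_two_iff_integrable_sq hf).2 hsq).integrable one_le_two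

theorem integral_Ioi_mul_sub_min_div_mul {g w : ℝ → ℝ} {d : ℝ} (hd : 0 < d)
    (hw : ∀ y ∈ Ioc 0 d, w y ≠ 0) :
    ∫ y in Ioi 0, g y * ((d - min y d) / (d * w y)) * w y
      = (1 / d) * ∫ s in 0..d, (d - s) * g s := by
  have hint : EqOn (fun y => g y * ((d - min y d) / (d * w y)) * w y)
      ((Ioc 0 d).indicator fun s => (1 / d) * ((d - s) * g s)) (Ioi 0) := by
    intro y (hy : 0 < y)
    dsimp only
    rcases le_or_gt y d with hyd | hyd
    · rw [indicator_of_mem (show y ∈ Ioc 0 d from ⟨hy, hyd⟩), min_eq_left hyd]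
      field_simp [hw y ⟨hy, hyd⟩]
    · rw [indicator_of_notMem fun h => hyd.not_ge h.2, min_eq_right hyd.le]
      simp
  rw [setIntegral_congr_fun measurableSet_Ioi hint, setIntegral_indicator measurableSet_Ioc,
    inter_eq_right.2 Ioc_subset_Ioi_self, MeasureTheory.integral_const_mul, integral_of_le hd.le]

/-- the Riesz representative of `I_d` on `H_w` is
`h_d^I(y) = 1 + (1/d)∫_0^y (d − s∧d)/w(s) ds` (with weak derivative
`y ↦ (d − y∧d)/(d w(y))`): `I_d(h) = ⟨h, h_d^I⟩_w` for all `h ∈ H_w`. -/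
theorem statement5 (w : ℝ → ℝ) (hw : FiliWeight w) (d : ℝ) (hd : 0 < d)
    (h h' : ℝ → ℝ) (hh : FiliMem w h h') :
    (1 / d) * ∫ u in (0:ℝ)..d, h u
      = filiInner w h (fun y => 1 + (1 / d) * ∫ s in (0:ℝ)..y, (d - min s d) / w s)
          h' (fun y => (d - min y d) / (d * w y)) := by
  have hw_ne : ∀ y ∈ Ioc 0 d, w y ≠ 0 := fun y hy =>
    (zero_lt_one.trans_le (hw.one_le y hy.1.le)).ne'
  have hh' : IntegrableOn h' (Ioc 0 d) :=
    Integrable.of_integrable_sq_mul hh.meas_deriv.aestronglyMeasurable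
      ((ae_restrict_mem measurableSet_Ioc).mono fun y hy => hw.one_le y hy.1.le)
      (hh.energy.mono_set Ioc_subset_Ioi_self)
  rw [filiInner,
    integral_eq_sub_smul_add_integral_sub_smul hd.le (fun x hx => hh.abs_cont x hx.1) hh',
    integral_Ioi_mul_sub_min_div_mul hd hw_ne]
  simp only [smul_eq_mul, integral_same, sub_zero, mul_zero, add_zero, mul_one]
  field_simp
end

section
/- In the Filipović space H_w, for x ≥ 0 and d > 0, the forward price functional satisfies J_{x,d}(h) = (1/d) ∫_0^d δ_{x+u}(h) du = ⟨h, h_{x,d}⟩_w for all h ∈ H_w, where h_{x,d} is continuous, nondecreasing, bounded by 1 + ∫_0^∞ 1/w(s) ds, and constant on [x+d, ∞). -/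
open MeasureTheory Real Set

/-- The piecewise function `h_{x,d}` of the paper. -/
noncomputable def hxd (w : ℝ → ℝ) (x d : ℝ) : ℝ → ℝ := fun y =>
  if y ≤ x then 1 + ∫ s in (0:ℝ)..y, (w s)⁻¹
  else (1 + ∫ s in (0:ℝ)..x, (w s)⁻¹) + ∫ s in (0:ℝ)..(min (y - x) d), (d - s) / (d * w (s + x))

/-- Its weak derivative. -/
noncomputable def hxd' (w : ℝ → ℝ) (x d : ℝ) : ℝ → ℝ := fun y =>
  if y ≤ x then (w y)⁻¹
  else if y ≤ x + d then (d - (y - x)) / (d * w y) else 0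

/-!
On `[0, ∞)`, `hxd w x d` is the primitive of `hxd' w x d` starting from `1`, and
`0 ≤ hxd' ≤ 1 / w` there; continuity, monotonicity and the bound follow.

For the representation, write `h (x + u) = h 0 + ∫_0^{x+u} h'` and exchange the order of
integration: `h' y` then carries the weight `|{u ∈ (0, d] : y < x + u}| = x + d - max x y`,
which is `d · hxd' y · w y`.
-/

theorem integral_primitive_eq_integral_mul_sub_max {f : ℝ → ℝ} {a b c : ℝ} (hca : c ≤ a)
    (hab : a ≤ b) (hf : IntegrableOn f (Ioc c b)) :
    ∫ u in a..b, ∫ y in c..u, f y = ∫ y in c..b, f y * (b - max a y) := by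
  set F := (Ioc c b).indicator f
  have hF : Integrable F := hf.integrable_indicator measurableSet_Ioc
  set K : ℝ → ℝ → ℝ := fun u y => (Iio u).indicator F y
  have hK : Integrable (Function.uncurry K) ((volume.restrict (Ioc a b)).prod volume) :=
    (hF.comp_snd _).indicator (measurableSet_lt measurable_snd measurable_fst)
  have h_inner : ∀ u ∈ Ioc a b, ∫ y in c..u, f y = ∫ y, K u y := by
    intro u hu
    rw [integral_indicator measurableSet_Iio, ← integral_Iic_eq_integral_Iio,
      setIntegral_indicator measurableSet_Ioc, Iic_inter_Ioc_of_le hu.2,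
      intervalIntegral.integral_of_le (hca.trans hu.1.le)]
  have h_len :
      ∀ y, ∫ u in Ioc a b, K u y = (Ioc c b).indicator (fun y => f y * (b - max a y)) y := by
    intro y
    change ∫ u in Ioc a b, (Ioi y).indicator (fun _ => F y) u = _
    rw [integral_indicator measurableSet_Ioi, Measure.restrict_restrict measurableSet_Ioi,
      inter_comm, Ioc_inter_Ioi, setIntegral_const, Real.volume_real_Ioc, smul_eq_mul]
    by_cases hy : y ∈ Ioc c b
    · simp only [F, indicator_of_mem hy]
      rw [max_eq_left (by simp [hy.2, hab])]
      ring
    · simp [F, indicator_of_notMem hy]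
  rw [intervalIntegral.integral_of_le hab, setIntegral_congr_fun measurableSet_Ioc h_inner,
    integral_integral_swap hK, integral_congr_ae (ae_of_all _ h_len),
    integral_indicator measurableSet_Ioc, intervalIntegral.integral_of_le (hca.trans hab)]

theorem MeasureTheory.IntegrableOn.intervalIntegrable_of_Ici {f : ℝ → ℝ} {a b c : ℝ}
    (hf : IntegrableOn f (Ici c)) (ha : c ≤ a) (hb : c ≤ b) : IntervalIntegrable f volume a b :=
  (hf.mono_set fun _ hs => (le_min ha hb).trans hs.1).intervalIntegrable

theorem MeasureTheory.IntegrableOn.continuousOn_primitive_Ici {f : ℝ → ℝ} {a : ℝ}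
    (hf : IntegrableOn f (Ici a)) :
    ContinuousOn (fun y => ∫ s in a..y, f s) (Ici a) := by
  refine ((hf.integrable_indicator measurableSet_Ici).continuous_primitive a).continuousOn.congr
    fun y hy => intervalIntegral.integral_congr fun s hs => ?_
  rw [uIcc_of_le hy] at hs
  exact (indicator_of_mem hs.1 f).symm

theorem MeasureTheory.IntegrableOn.monotoneOn_primitive_Ici {f : ℝ → ℝ} {a : ℝ}
    (hf : IntegrableOn f (Ici a)) (hf_nonneg : ∀ y, a ≤ y → 0 ≤ f y) :
    MonotoneOn (fun y => ∫ s in a..y, f s) (Ici a) := by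
  intro u hu v hv huv
  rw [← sub_nonneg, intervalIntegral.integral_interval_sub_left
    (hf.intervalIntegrable_of_Ici le_rfl hv) (hf.intervalIntegrable_of_Ici le_rfl hu)]
  exact intervalIntegral.integral_nonneg huv fun s hs => hf_nonneg s (hu.trans hs.1)

namespace FiliWeight

variable {w : ℝ → ℝ} (hw : FiliWeight w)
include hw

theorem pos_s11 {y : ℝ} (hy : 0 ≤ y) : 0 < w y := one_pos.trans_le (hw.one_le y hy)

theorem integrableOn_inv_Ici : IntegrableOn (fun s => (w s)⁻¹) (Ici 0) :=
  (integrableOn_Ici_iff_integrableOn_Ioi).2 hw.int_inv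

theorem intervalIntegral_inv_le {y : ℝ} (hy : 0 ≤ y) :
    ∫ s in (0:ℝ)..y, (w s)⁻¹ ≤ ∫ s in Ioi (0:ℝ), (w s)⁻¹ := by
  rw [intervalIntegral.integral_of_le hy]
  refine setIntegral_mono_set hw.int_inv ?_ Ioc_subset_Ioi_self.eventuallyLE
  exact (ae_restrict_iff' measurableSet_Ioi).2
    (ae_of_all _ fun s hs => (inv_pos.2 (hw.pos_s11 hs.le)).le)

end FiliWeight

theorem FiliMem.integrableOn_Ioc {w h h' : ℝ → ℝ} (hw : FiliWeight w) (hm : FiliMem w h h')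
    (b : ℝ) : IntegrableOn h' (Ioc 0 b) := by
  refine Integrable.mono' (g := fun y => 1 + h' y ^ 2 * w y) ?_
    hm.meas_deriv.aestronglyMeasurable.restrict ?_
  · exact (integrableOn_const measure_Ioc_lt_top.ne).add (hm.energy.mono_set Ioc_subset_Ioi_self)
  refine (ae_restrict_iff' measurableSet_Ioc).2 (ae_of_all _ fun y hy => ?_)
  have hwy := hw.one_le y hy.1.le
  rw [Real.norm_eq_abs]
  nlinarith [sq_abs (h' y), abs_nonneg (h' y), sq_nonneg (|h' y| - 1), sq_nonneg (h' y)]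

section hxd

variable {w : ℝ → ℝ} {x d : ℝ}

theorem hxd'_of_le {y : ℝ} (hy : y ≤ x) : hxd' w x d y = (w y)⁻¹ := if_pos hy

theorem hxd'_of_ge (hd : 0 < d) {y : ℝ} (hy : x + d ≤ y) : hxd' w x d y = 0 := by
  unfold hxd'
  split_ifs with h1 h2
  · linarith
  · rw [show y = x + d by linarith]
    ring
  · rfl

theorem hxd'_nonneg (hw : FiliWeight w) (hd : 0 < d) {y : ℝ} (hy : 0 ≤ y) :
    0 ≤ hxd' w x d y := by
  unfold hxd'
  have := hw.pos_s11 hy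
  split_ifs with h1 h2
  · positivity
  · exact div_nonneg (by linarith) (by positivity)
  · exact le_rfl

theorem hxd'_le_inv (hw : FiliWeight w) (hd : 0 < d) {y : ℝ} (hy : 0 ≤ y) :
    hxd' w x d y ≤ (w y)⁻¹ := by
  unfold hxd'
  have := hw.pos_s11 hy
  split_ifs with h1 h2
  · exact le_rfl
  · rw [div_le_iff₀ (by positivity)]
    field_simp
    linarith
  · positivity

theorem hxd'_mul_eq_indicator (hw : FiliWeight w) (hd : 0 < d) {y : ℝ} (hy : 0 ≤ y) :
    hxd' w x d y * w y = (Iic (x + d)).indicator (fun y => (x + d - max x y) / d) y := by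
  have := (hw.pos_s11 hy).ne'
  unfold hxd'
  split_ifs with h1 h2
  · rw [indicator_of_mem (show y ∈ Iic (x + d) by simp; linarith), max_eq_left h1]
    field_simp
    ring
  · rw [indicator_of_mem (show y ∈ Iic (x + d) from h2), max_eq_right (le_of_not_ge h1)]
    field_simp
    ring
  · rw [indicator_of_notMem (show y ∉ Iic (x + d) from h2), zero_mul]

theorem measurable_hxd' (hw : FiliWeight w) : Measurable (hxd' w x d) := by
  have := hw.meas
  refine Measurable.ite (measurableSet_le measurable_id measurable_const) (by fun_prop) ?_
  exact Measurable.ite (measurableSet_le measurable_id measurable_const) (by fun_prop) (by fun_prop)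

theorem hxd'_add (hd : 0 < d) {s : ℝ} (hs : 0 ≤ s) (hsd : s ≤ d) :
    hxd' w x d (s + x) = (d - s) / (d * w (s + x)) := by
  unfold hxd'
  split_ifs with h1 h2
  · rw [show s = 0 by linarith, zero_add, sub_zero, div_mul_cancel_left₀ hd.ne']
  · rw [add_sub_cancel_right]
  · linarith

theorem integrableOn_hxd' (hw : FiliWeight w) (hd : 0 < d) :
    IntegrableOn (hxd' w x d) (Ici 0) := by
  refine hw.integrableOn_inv_Ici.mono' (measurable_hxd' hw).aestronglyMeasurable.restrict ?_
  refine (ae_restrict_iff' measurableSet_Ici).2 (ae_of_all _ fun y hy => ?_)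
  rw [Real.norm_of_nonneg (hxd'_nonneg hw hd hy)]
  exact hxd'_le_inv hw hd hy

theorem intervalIntegrable_hxd' (hw : FiliWeight w) (hd : 0 < d) {a b : ℝ} (ha : 0 ≤ a)
    (hb : 0 ≤ b) : IntervalIntegrable (hxd' w x d) volume a b :=
  (integrableOn_hxd' hw hd).intervalIntegrable_of_Ici ha hb

theorem hxd_eq_one_add_integral (hw : FiliWeight w) (hx : 0 ≤ x) (hd : 0 < d) {y : ℝ}
    (hy : 0 ≤ y) : hxd w x d y = 1 + ∫ s in (0:ℝ)..y, hxd' w x d s := by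
  have h_init : ∀ {z}, 0 ≤ z → z ≤ x →
      ∫ s in (0:ℝ)..z, hxd' w x d s = ∫ s in (0:ℝ)..z, (w s)⁻¹ :=
    fun hz hzx => intervalIntegral.integral_congr fun s hs => by
      rw [uIcc_of_le hz] at hs
      exact hxd'_of_le (hs.2.trans hzx)
  by_cases hyx : y ≤ x
  · rw [hxd, if_pos hyx, h_init hy hyx]
  set m := min (y - x) d
  have hm : 0 ≤ m := le_min (by linarith) hd.le
  have h_shift :
      ∫ s in (0:ℝ)..m, (d - s) / (d * w (s + x)) = ∫ s in x..x + m, hxd' w x d s := by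
    have := intervalIntegral.integral_comp_add_right (hxd' w x d) x (a := 0) (b := m)
    rw [zero_add, add_comm m] at this
    rw [← this]
    refine intervalIntegral.integral_congr fun s hs => ?_
    rw [uIcc_of_le hm] at hs
    exact (hxd'_add hd hs.1 (hs.2.trans (min_le_right _ _))).symm
  have h_tail : ∫ s in x..x + m, hxd' w x d s = ∫ s in x..y, hxd' w x d s := by
    rw [← sub_eq_zero, intervalIntegral.integral_interval_sub_left
      (intervalIntegrable_hxd' hw hd hx (by linarith))
      (intervalIntegrable_hxd' hw hd hx (by linarith))]
    rcases min_cases (y - x) d with ⟨hmin, -⟩ | ⟨hmin, hdy⟩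
    · rw [show m = y - x from hmin, add_sub_cancel, intervalIntegral.integral_same]
    · rw [show m = d from hmin, intervalIntegral.integral_congr (g := fun _ => 0),
        intervalIntegral.integral_zero]
      intro s hs
      rw [uIcc_of_ge (by linarith)] at hs
      exact hxd'_of_ge hd hs.1
  rw [hxd, if_neg hyx, h_shift, h_tail, ← h_init hx le_rfl, add_assoc,
    intervalIntegral.integral_add_adjacent_intervals (intervalIntegrable_hxd' hw hd le_rfl hx)
      (intervalIntegrable_hxd' hw hd hx hy)]

end hxd

theorem FiliMem.average_eq_filiInner {w h h' : ℝ → ℝ} (hw : FiliWeight w)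
    (hm : FiliMem w h h') {x d : ℝ} (hx : 0 ≤ x) (hd : 0 < d) :
    (1 / d) * ∫ u in (0:ℝ)..d, h (x + u) = filiInner w h (hxd w x d) h' (hxd' w x d) := by
  have hh' := hm.integrableOn_Ioc hw (x + d)
  have h_prim : ContinuousOn (fun v => ∫ y in (0:ℝ)..v, h' y) (uIcc 0 (x + d)) :=
    intervalIntegral.continuousOn_primitive_interval
      (by rwa [uIcc_of_le (by linarith), integrableOn_Icc_iff_integrableOn_Ioc])
  have hx_mem : x ∈ uIcc 0 (x + d) := by
    rw [uIcc_of_le (by linarith)]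
    exact ⟨hx, by linarith⟩
  have h_avg : ∫ u in (0:ℝ)..d, h (x + u)
      = d * h 0 + ∫ y in (0:ℝ)..x + d, h' y * (x + d - max x y) := calc
    _ = ∫ v in x..x + d, h v := by rw [intervalIntegral.integral_comp_add_left h, add_zero]
    _ = ∫ v in x..x + d, (h 0 + ∫ y in (0:ℝ)..v, h' y) :=
      intervalIntegral.integral_congr fun v hv =>
        hm.abs_cont v (hx.trans (by rw [uIcc_of_le (by linarith)] at hv; exact hv.1))
    _ = d * h 0 + ∫ v in x..x + d, ∫ y in (0:ℝ)..v, h' y := by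
      rw [intervalIntegral.integral_add intervalIntegrable_const
        (h_prim.mono (uIcc_subset_uIcc hx_mem right_mem_uIcc)).intervalIntegrable]
      simp
    _ = _ := by rw [integral_primitive_eq_integral_mul_sub_max hx (by linarith) hh']
  have h_energy : ∫ y in Ioi (0:ℝ), h' y * hxd' w x d y * w y
      = (∫ y in (0:ℝ)..x + d, h' y * (x + d - max x y)) / d := calc
    _ = ∫ y in Ioi (0:ℝ), (Iic (x + d)).indicator (fun y => h' y * ((x + d - max x y) / d)) y :=
      setIntegral_congr_fun measurableSet_Ioi fun y hy => by
        rw [mul_assoc, hxd'_mul_eq_indicator hw hd (le_of_lt hy), indicator_mul_right]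
    _ = _ := by
      rw [setIntegral_indicator measurableSet_Iic, Ioi_inter_Iic,
        ← intervalIntegral.integral_of_le (by linarith), ← intervalIntegral.integral_div]
      simp_rw [mul_div_assoc]
  have h_zero : hxd w x d 0 = 1 := by simp [hxd, hx]
  rw [filiInner, h_avg, h_energy, h_zero]
  field_simp

/-- `J_{x,d}(h) = (1/d)∫_0^d δ_{x+u}(h) du = ⟨h, h_{x,d}⟩_w` for all
`h ∈ H_w`, and `h_{x,d}` is continuous, nondecreasing, bounded by `1 + ∫_0^∞ 1/w`,
and constant on `[x+d, ∞)`. -/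
theorem statement11 (w : ℝ → ℝ) (hw : FiliWeight w) (x : ℝ) (hx : 0 ≤ x)
    (d : ℝ) (hd : 0 < d) :
    (∀ h h' : ℝ → ℝ, FiliMem w h h' →
      (1 / d) * ∫ u in (0:ℝ)..d, h (x + u)
        = filiInner w h (hxd w x d) h' (hxd' w x d)) ∧
    ContinuousOn (hxd w x d) (Set.Ici 0) ∧
    MonotoneOn (hxd w x d) (Set.Ici 0) ∧
    (∀ y : ℝ, 0 ≤ y → hxd w x d y ≤ 1 + ∫ s in Set.Ioi (0:ℝ), (w s)⁻¹) ∧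
    (∀ y : ℝ, x + d ≤ y → hxd w x d y = hxd w x d (x + d)) := by
  have h_eq : EqOn (hxd w x d) (fun y => 1 + ∫ s in (0:ℝ)..y, hxd' w x d s) (Ici 0) :=
    fun y hy => hxd_eq_one_add_integral hw hx hd hy
  have h_int := integrableOn_hxd' hw hd (x := x)
  refine ⟨fun h h' hm => hm.average_eq_filiInner hw hx hd, ?_, ?_, ?_, ?_⟩
  · exact (continuousOn_const.add h_int.continuousOn_primitive_Ici).congr h_eq
  · exact (monotoneOn_const.add
      (h_int.monotoneOn_primitive_Ici fun y hy => hxd'_nonneg hw hd hy)).congr h_eq.symm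
  · intro y hy
    rw [h_eq hy, add_le_add_iff_left]
    calc ∫ s in (0:ℝ)..y, hxd' w x d s ≤ ∫ s in (0:ℝ)..y, (w s)⁻¹ :=
          intervalIntegral.integral_mono_on hy (intervalIntegrable_hxd' hw hd le_rfl hy)
            (hw.integrableOn_inv_Ici.intervalIntegrable_of_Ici le_rfl hy)
            fun s hs => hxd'_le_inv hw hd hs.1
      _ ≤ _ := hw.intervalIntegral_inv_le hy
  · intro y hy
    have hy_gt : ¬ y ≤ x := by linarith
    have hxd_gt : ¬ x + d ≤ x := by linarith
    simp only [hxd, if_neg hy_gt, if_neg hxd_gt, min_eq_right (show d ≤ y - x by linarith),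
      add_sub_cancel_left, min_self]
end
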